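/- Let Γ be a RAACH with generating set S and associated pair (H*,w), and let G = Cay(Γ,S). Let S₁ = S* be the 1-sphere around the identity e in G and S₂ the 2-sphere. Let Δ_{S₁} be the Laplacian (vertex measure ≡ 1, unit edge weights) of the subgraph of G induced on S₁, and let Δ_{S₁'} be the weighted Laplacian on vertex set S₁ with vertex measure ≡ 1 and edge weights w'(u,v) = Σ_{z ∈ S₂, z ∼ u, z ∼ v} 1/d_z⁻ for u ≠ v, where d_z⁻ = |{y ∈ S₁ : y ∼ z}|. Then, as matrices indexed by S*, the weighted Laplacian Δ_{H*} of (H*,w) with vertex measure ≡ 1 satisfies Δ_{H*} = 2Δ_{S₁} + 2Δ_{S₁'}. -/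

import Mathlib

set_option linter.unusedVariables false

attribute [local instance] Classical.propDecidable

/-- The Cayley graph of a group `G` with respect to a connecting set `T`
(assumed closed under inversion, e.g. a symmetrized generating set). -/
def cayley (G : Type*) [Group G] (T : Set G) : SimpleGraph G where
  Adj x y := x ≠ y ∧ (x⁻¹ * y ∈ T ∨ y⁻¹ * x ∈ T)
  symm := ⟨fun x y h => ⟨h.1.symm, h.2.symm⟩⟩
  loopless := ⟨fun x h => h.1 rfl⟩

open scoped commutatorElement

/-- The defining relators of a Right Angled Artin-Coxeter Hybrid: `s ^ (m s) = 1` for every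
generator `s` with finite order prescription `m s`, and commutators for edges of `H`. -/
def raachRels {S : Type*} (H : SimpleGraph S) (m : S → ℕ∞) : Set (FreeGroup S) :=
  {r | ∃ (s : S) (k : ℕ), m s = (k : ℕ∞) ∧ r = FreeGroup.of s ^ k} ∪
  {r | ∃ s t : S, H.Adj s t ∧ r = ⁅FreeGroup.of s, FreeGroup.of t⁆}

/-- The Right Angled Artin-Coxeter Hybrid with defining graph `(H, m)`. -/
abbrev RAACH {S : Type*} (H : SimpleGraph S) (m : S → ℕ∞) : Type _ :=
  PresentedGroup (raachRels H m)

/-- The generator of a RAACH corresponding to `s : S`. -/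
def raachGen {S : Type*} (H : SimpleGraph S) (m : S → ℕ∞) (s : S) : RAACH H m :=
  PresentedGroup.of s

/-- The symmetrized generating set `S* = {s, s⁻¹ | s ∈ S}` inside the RAACH. -/
def Sstar {S : Type*} (H : SimpleGraph S) (m : S → ℕ∞) : Set (RAACH H m) :=
  {g | ∃ s : S, g = raachGen H m s ∨ g = (raachGen H m s)⁻¹}

/-- The Cayley graph `Cay(Γ, S)` of the RAACH `Γ` with defining graph `(H, m)`. -/
def cayRAACH {S : Type*} (H : SimpleGraph S) (m : S → ℕ∞) : SimpleGraph (RAACH H m) :=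
  cayley (RAACH H m) (Sstar H m)

/-- The edge weight function of the associated pair `(H*, w)` of a RAACH:
`w(s,t) = 1` if `s`, `t` commute and `t ∉ {s, s⁻¹}`; `w(s, s⁻¹) = 1` if `ord(s) = 4`;
`w(s, s⁻¹) = 2` if `ord(s) = 3`; and `w(s,t) = 0` otherwise. -/
noncomputable def apWeight {S : Type*} (H : SimpleGraph S) (m : S → ℕ∞)
    (s t : RAACH H m) : ℕ :=
  if Commute s t ∧ t ≠ s ∧ t ≠ s⁻¹ then 1
  else if t = s⁻¹ ∧ orderOf s = 4 then 1
  else if t = s⁻¹ ∧ orderOf s = 3 then 2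
  else 0

/-- The weighted Laplacian `Δ_{H*}` of the associated pair `(H*, w)` (vertex measure ≡ 1),
acting on functions and restricted to `S*`. -/
noncomputable def lapHstar {S : Type*} (H : SimpleGraph S) (m : S → ℕ∞)
    (f : RAACH H m → ℝ) (s : RAACH H m) : ℝ :=
  ∑ᶠ t ∈ Sstar H m, (apWeight H m s t : ℝ) * (f t - f s)

/-- The Laplacian `Δ_{S₁}` of the subgraph of the Cayley graph induced on the 1-sphere
`S₁(e) = S*` (vertex measure ≡ 1, unit edge weights). -/
noncomputable def lapS1 {S : Type*} (H : SimpleGraph S) (m : S → ℕ∞)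
    (f : RAACH H m → ℝ) (s : RAACH H m) : ℝ :=
  ∑ᶠ t ∈ Sstar H m, (if (cayRAACH H m).Adj s t then (1 : ℝ) else 0) * (f t - f s)

/-- The 2-sphere around the identity in the Cayley graph. -/
def sphere2 {S : Type*} (H : SimpleGraph S) (m : S → ℕ∞) : Set (RAACH H m) :=
  {z | (cayRAACH H m).dist 1 z = 2}

/-- The in-degree `d_z⁻` of `z ∈ S₂(e)`: the number of vertices of `S₁(e)` adjacent to `z`. -/
noncomputable def dzMinus {S : Type*} (H : SimpleGraph S) (m : S → ℕ∞)
    (z : RAACH H m) : ℕ :=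
  Nat.card {y : RAACH H m // y ∈ Sstar H m ∧ (cayRAACH H m).Adj y z}

/-- The edge weights `w'(u,v) = Σ_{z ∈ S₂, z ∼ u, z ∼ v} 1/d_z⁻` (for `u ≠ v`) on `S₁(e)`. -/
noncomputable def wS1' {S : Type*} (H : SimpleGraph S) (m : S → ℕ∞)
    (u v : RAACH H m) : ℝ :=
  if u = v then 0
  else ∑ᶠ z ∈ sphere2 H m,
    if (cayRAACH H m).Adj u z ∧ (cayRAACH H m).Adj v z then ((dzMinus H m z : ℝ))⁻¹ else 0

/-- The weighted Laplacian `Δ_{S₁'}` on `S₁(e)` with edge weights `wS1'` and vertex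
measure ≡ 1. -/
noncomputable def lapS1' {S : Type*} (H : SimpleGraph S) (m : S → ℕ∞)
    (f : RAACH H m → ℝ) (s : RAACH H m) : ℝ :=
  ∑ᶠ t ∈ Sstar H m, wS1' H m s t * (f t - f s)

/-!
It suffices to compare, for `s ≠ t` in `S*`, the coefficients of `f t`, i.e. to show
`w(s,t) = 2·[s ∼ t] + 2·w'(s,t)`.

For each generator `b`, sending `b` to itself and every other generator to `1` defines a retraction
of `Γ` onto `⟨b⟩`. Applying these retractions to an equation `x₁x₂ = y₁y₂ ≠ 1` between products of
letters shows that `{y₁, y₂} = {x₁, x₂}`, except for the coincidence `x² = x⁻²` of a letter of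
order 4. Consequently `s ∼ t` iff `t = s⁻¹` has order 3, and `s`, `t` have a common neighbour
in the 2-sphere iff either they commute and `t ≠ s⁻¹` (the neighbour is `st = ts`), or `t = s⁻¹`
has order 4 (the neighbour is `s²`). That neighbour is unique, and `s`, `t` are its only neighbours
in `S*`, so `w'(s,t)` is `1/2` or `0`. Comparing with the definition of `w` case by case gives
the identity.
-/

theorem finsum_mem_ite_eq_of_iff {α M : Type*} [AddCommMonoid M] {s : Set α} {p : α → Prop}
    [DecidablePred p] {g : α → M} {a : α} (h : ∀ x, x ∈ s ∧ p x ↔ x = a) :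
    ∑ᶠ x ∈ s, (if p x then g x else 0) = g a := by
  rw [finsum_mem_inter_support_eq' _ s {a} fun x hx => ?_, finsum_mem_singleton,
    if_pos ((h a).2 rfl).2]
  have hpx : p x := by_contra fun hpx => hx (if_neg hpx)
  simpa [hpx] using h x

theorem SimpleGraph.dist_eq_two_iff {V : Type*} {G : SimpleGraph V} {u v : V} :
    G.dist u v = 2 ↔ u ≠ v ∧ ¬G.Adj u v ∧ (G.commonNeighbors u v).Nonempty := by
  rw [SimpleGraph.dist, ENat.toNat_eq_iff two_ne_zero]
  exact_mod_cast SimpleGraph.edist_eq_two_iff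

section Cayley

variable {G : Type*} [Group G] {T : Set G}

theorem cayley_adj_iff (hT : ∀ x ∈ T, x⁻¹ ∈ T) (h1 : (1 : G) ∉ T) {x y : G} :
    (cayley G T).Adj x y ↔ x⁻¹ * y ∈ T := by
  refine ⟨fun ⟨_, h⟩ => h.elim id fun h => by simpa using hT _ h, fun h => ⟨?_, Or.inl h⟩⟩
  rintro rfl
  exact h1 (by simpa using h)

theorem cayley_dist_one_eq_two_iff_of_adj (hT : ∀ x ∈ T, x⁻¹ ∈ T) (h1 : (1 : G) ∉ T)
    {y z : G} (hy : y ∈ T) (hyz : (cayley G T).Adj y z) :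
    (cayley G T).dist 1 z = 2 ↔ z ≠ 1 ∧ z ∉ T := by
  have hadj : ∀ {w}, (cayley G T).Adj 1 w ↔ w ∈ T := by
    intro w; rw [cayley_adj_iff hT h1, inv_one, one_mul]
  rw [SimpleGraph.dist_eq_two_iff, hadj, ne_comm]
  exact and_congr_right fun _ => and_iff_left ⟨y, hadj.2 hy, hyz.symm⟩

end Cayley

namespace RAACH

variable {S : Type*} {H : SimpleGraph S} {m : S → ℕ∞}

theorem raachGen_pow_toNat (a : S) : raachGen H m a ^ (m a).toNat = 1 := by
  by_cases htop : m a = ⊤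
  · simp [htop]
  obtain ⟨k, hk⟩ := ENat.ne_top_iff_exists.1 htop
  rw [← hk, ENat.toNat_natCast]
  exact (map_pow _ _ _).symm.trans
    (PresentedGroup.one_of_mem (Or.inl ⟨a, k, hk.symm, rfl⟩ : FreeGroup.of a ^ k ∈ raachRels H m))

def lift {K : Type*} [Group K] (f : S → K) (hf : ∀ a, f a ^ (m a).toNat = 1)
    (hcomm : ∀ a b, H.Adj a b → Commute (f a) (f b)) : RAACH H m →* K :=
  PresentedGroup.toGroup (f := f) <| by
    rintro r (⟨a, k, hk, rfl⟩ | ⟨a, b, hab, rfl⟩)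
    · simpa [hk] using hf a
    · simpa [commutatorElement_eq_one_iff_commute] using hcomm a b hab

@[simp]
theorem lift_raachGen {K : Type*} [Group K] (f : S → K) (hf : ∀ a, f a ^ (m a).toNat = 1)
    (hcomm : ∀ a b, H.Adj a b → Commute (f a) (f b)) (a : S) :
    lift f hf hcomm (raachGen H m a) = f a :=
  PresentedGroup.toGroup.of _

theorem raachGen_ne_one {a : S} (ha : m a ≠ 1) : raachGen H m a ≠ 1 := by
  have : Nontrivial (ZMod (m a).toNat) :=
    ZMod.nontrivial_iff.2 (by rwa [Ne, ENat.toNat_eq_iff one_ne_zero, Nat.cast_one])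
  let χ : RAACH H m →* Multiplicative (ZMod (m a).toNat) :=
    lift (fun b => if b = a then Multiplicative.ofAdd 1 else 1)
      (fun b => by
        split_ifs with h
        · subst h
          rw [← ofAdd_nsmul, nsmul_eq_mul, mul_one, ZMod.natCast_self, ofAdd_zero]
        · exact one_pow _)
      (fun _ _ _ => Commute.all _ _)
  intro h
  simpa [χ] using congrArg χ h

noncomputable def retraction (b : S) : RAACH H m →* RAACH H m :=
  lift (fun a => if a = b then raachGen H m b else 1)
    (fun a => by
      split_ifs with h
      · subst h; exact raachGen_pow_toNat a
      · exact one_pow _)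
    (fun _ _ _ => by split_ifs <;> simp)

def letters (a : S) : Set (RAACH H m) := {raachGen H m a, (raachGen H m a)⁻¹}

theorem retraction_of_mem_letters {a : S} {x : RAACH H m} (hx : x ∈ letters a) (b : S) :
    retraction b x = if a = b then x else 1 := by
  rcases hx with rfl | rfl <;> by_cases h : a = b <;> simp [retraction, h]

theorem ne_one_of_mem_letters {a : S} (ha : m a ≠ 1) {x : RAACH H m} (hx : x ∈ letters a) :
    x ≠ 1 := by
  rcases hx with rfl | rfl <;> simpa using raachGen_ne_one ha

theorem eq_or_eq_inv_of_mem_letters {a : S} {x y : RAACH H m} (hx : x ∈ letters a)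
    (hy : y ∈ letters a) : y = x ∨ y = x⁻¹ := by
  rcases hx with rfl | rfl <;> rcases hy with rfl | rfl <;> simp

theorem one_notMem_Sstar (hm : ∀ a, m a ≠ 1) : (1 : RAACH H m) ∉ Sstar H m :=
  fun ⟨a, ha⟩ => ne_one_of_mem_letters (hm a) ha rfl

theorem inv_mem_Sstar {x : RAACH H m} (hx : x ∈ Sstar H m) : x⁻¹ ∈ Sstar H m := by
  obtain ⟨a, rfl | rfl⟩ := hx
  exacts [⟨a, Or.inr rfl⟩, ⟨a, Or.inl (inv_inv _)⟩]

theorem finite_Sstar [Finite S] : (Sstar H m).Finite := by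
  have : Sstar H m = ⋃ a, letters a := by ext; simp [Sstar, letters]
  rw [this]
  exact Set.finite_iUnion fun a => (Set.finite_singleton _).insert _

theorem mul_mem_Sstar_iff (hm : ∀ a, m a ≠ 1) {x y : RAACH H m} (hx : x ∈ Sstar H m)
    (hy : y ∈ Sstar H m) : x * y ∈ Sstar H m ↔ y = x ∧ orderOf x = 3 := by
  refine ⟨fun hxy => ?_, ?_⟩
  · obtain ⟨a, hx⟩ := hx
    obtain ⟨b, hy⟩ := hy
    obtain ⟨c, hxy⟩ := hxy
    have hx1 := ne_one_of_mem_letters (hm a) hx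
    have hy1 := ne_one_of_mem_letters (hm b) hy
    have hret := (map_mul (retraction c) x y).symm
    rw [retraction_of_mem_letters hx, retraction_of_mem_letters hy,
      retraction_of_mem_letters hxy, if_pos rfl] at hret
    obtain rfl : a = c := by
      by_contra hac
      obtain rfl | hbc := eq_or_ne b c
      · exact hx1 (by simpa [hac] using hret)
      · exact ne_one_of_mem_letters (hm c) hxy (by simpa [hac, hbc] using hret.symm)
    obtain rfl : b = a := by
      by_contra hba
      exact hy1 (by simpa [hba] using hret)
    obtain rfl | rfl := eq_or_eq_inv_of_mem_letters hx hy
    · refine ⟨rfl, orderOf_eq_prime ?_ hx1⟩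
      obtain h | h := eq_or_eq_inv_of_mem_letters hx hxy
      · exact absurd (by simpa using h) hx1
      · rw [pow_succ, pow_two, h, inv_mul_cancel]
    · exact (ne_one_of_mem_letters (hm _) hxy (mul_inv_cancel x)).elim
  · rintro ⟨rfl, h3⟩
    have hsq : y * y = y⁻¹ :=
      eq_inv_of_mul_eq_one_left (by rw [← pow_three', ← h3, pow_orderOf_eq_one])
    rw [hsq]
    exact inv_mem_Sstar hy

theorem mul_eq_mul_of_mem_letters_of_ne (hm : ∀ a, m a ≠ 1) {a₁ a₂ : S} (ha : a₁ ≠ a₂)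
    {x₁ x₂ y₁ y₂ : RAACH H m} (hx₁ : x₁ ∈ letters a₁) (hx₂ : x₂ ∈ letters a₂)
    (hy₁ : y₁ ∈ Sstar H m) (hy₂ : y₂ ∈ Sstar H m) (h : x₁ * x₂ = y₁ * y₂) :
    (y₁ = x₁ ∧ y₂ = x₂) ∨ (y₁ = x₂ ∧ y₂ = x₁) := by
  obtain ⟨c₁, hy₁⟩ := hy₁
  obtain ⟨c₂, hy₂⟩ := hy₂
  have h₁ := congrArg (retraction a₁) h
  have h₂ := congrArg (retraction a₂) h
  simp only [map_mul, retraction_of_mem_letters hx₁, retraction_of_mem_letters hx₂,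
    retraction_of_mem_letters hy₁, retraction_of_mem_letters hy₂, if_neg ha,
    if_neg ha.symm, mul_one, one_mul] at h₁ h₂
  have := ne_one_of_mem_letters (hm a₁) hx₁
  have := ne_one_of_mem_letters (hm a₂) hx₂
  -- `h₁`, `h₂` alone settle every case: each retraction keeps exactly the letters of its generator.
  split_ifs at h₁ h₂ <;> simp_all

theorem mul_eq_mul_of_mem_Sstar (hm : ∀ a, m a ≠ 1) {x₁ x₂ y₁ y₂ : RAACH H m}
    (hx₁ : x₁ ∈ Sstar H m) (hx₂ : x₂ ∈ Sstar H m) (hy₁ : y₁ ∈ Sstar H m)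
    (hy₂ : y₂ ∈ Sstar H m) (h : x₁ * x₂ = y₁ * y₂) (hne : x₁ * x₂ ≠ 1) :
    (y₁ = x₁ ∧ y₂ = x₂) ∨ (y₁ = x₂ ∧ y₂ = x₁) ∨ (x₂ = x₁ ∧ y₁ = x₁⁻¹ ∧ y₂ = x₁⁻¹) := by
  obtain ⟨a₁, hx₁⟩ := hx₁
  obtain ⟨a₂, hx₂⟩ := hx₂
  obtain ⟨c₁, hy₁⟩ := hy₁
  obtain ⟨c₂, hy₂⟩ := hy₂
  by_cases ha : a₁ = a₂
  swap
  · exact (mul_eq_mul_of_mem_letters_of_ne hm ha hx₁ hx₂ ⟨c₁, hy₁⟩ ⟨c₂, hy₂⟩ h).imp_right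
      Or.inl
  subst ha
  obtain rfl : x₂ = x₁ := (eq_or_eq_inv_of_mem_letters hx₁ hx₂).resolve_right
    fun hinv => hne (by rw [hinv, mul_inv_cancel])
  by_cases hc : c₁ = c₂
  swap
  · rcases mul_eq_mul_of_mem_letters_of_ne hm hc hy₁ hy₂ ⟨a₁, hx₁⟩ ⟨a₁, hx₁⟩ h.symm with
      ⟨rfl, rfl⟩ | ⟨rfl, rfl⟩ <;> simp
  subst hc
  obtain rfl : y₂ = y₁ := (eq_or_eq_inv_of_mem_letters hy₁ hy₂).resolve_right
    fun hinv => hne (by rw [h, hinv, mul_inv_cancel])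
  obtain rfl : c₁ = a₁ := by
    by_contra hca
    have := congrArg (retraction a₁) h
    simp only [map_mul, retraction_of_mem_letters hx₁, retraction_of_mem_letters hy₁,
      if_neg hca, mul_one] at this
    exact hne this
  rcases eq_or_eq_inv_of_mem_letters hx₁ hy₁ with rfl | rfl <;> simp

theorem cayRAACH_adj_iff (hm : ∀ a, m a ≠ 1) {x y : RAACH H m} :
    (cayRAACH H m).Adj x y ↔ x⁻¹ * y ∈ Sstar H m :=
  cayley_adj_iff (fun _ => inv_mem_Sstar) (one_notMem_Sstar hm)

theorem cayRAACH_adj_iff_of_mem_Sstar (hm : ∀ a, m a ≠ 1) {s t : RAACH H m}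
    (hs : s ∈ Sstar H m) (ht : t ∈ Sstar H m) :
    (cayRAACH H m).Adj s t ↔ t = s⁻¹ ∧ orderOf s = 3 := by
  rw [cayRAACH_adj_iff hm, mul_mem_Sstar_iff hm (inv_mem_Sstar hs) ht, orderOf_inv]

theorem mem_sphere2_iff_of_adj (hm : ∀ a, m a ≠ 1) {s z : RAACH H m} (hs : s ∈ Sstar H m)
    (hsz : (cayRAACH H m).Adj s z) : z ∈ sphere2 H m ↔ z ≠ 1 ∧ z ∉ Sstar H m :=
  cayley_dist_one_eq_two_iff_of_adj (fun _ => inv_mem_Sstar) (one_notMem_Sstar hm) hs hsz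

theorem eq_mul_or_eq_mul_self_of_mem_commonNeighbors (hm : ∀ a, m a ≠ 1) {s t z : RAACH H m}
    (hs : s ∈ Sstar H m) (ht : t ∈ Sstar H m) (hst : s ≠ t) (hz : z ≠ 1)
    (hzst : z ∈ (cayRAACH H m).commonNeighbors s t) :
    (Commute s t ∧ z = s * t) ∨ (t = s⁻¹ ∧ z = s * s ∧ s * s = t * t) := by
  rw [SimpleGraph.mem_commonNeighbors, cayRAACH_adj_iff hm, cayRAACH_adj_iff hm] at hzst
  have hzs : s * (s⁻¹ * z) = z := mul_inv_cancel_left s z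
  have hzt : t * (t⁻¹ * z) = z := mul_inv_cancel_left t z
  rcases mul_eq_mul_of_mem_Sstar hm hs hzst.1 ht hzst.2 (hzs.trans hzt.symm) (by rwa [hzs]) with
    ⟨rfl, -⟩ | ⟨h₁, h₂⟩ | ⟨h₁, rfl, h₂⟩
  · exact absurd rfl hst
  · have hz_st : s * t = z := by rw [h₁, mul_inv_cancel_left]
    have hz_ts : t * s = z := by rw [← h₂, mul_inv_cancel_left]
    exact Or.inl ⟨hz_st.trans hz_ts.symm, hz_st.symm⟩
  · have hss : z = s * s := by rw [← hzs, h₁]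
    exact Or.inr ⟨rfl, hss, hss.symm.trans (inv_mul_eq_iff_eq_mul.1 h₂)⟩

theorem eq_or_eq_of_adj_of_mem_commonNeighbors (hm : ∀ a, m a ≠ 1) {s t u z : RAACH H m}
    (hs : s ∈ Sstar H m) (ht : t ∈ Sstar H m) (hu : u ∈ Sstar H m) (hst : s ≠ t) (hz : z ≠ 1)
    (hzst : z ∈ (cayRAACH H m).commonNeighbors s t) (huz : (cayRAACH H m).Adj u z) :
    u = s ∨ u = t := by
  by_contra! hne
  rcases eq_mul_or_eq_mul_self_of_mem_commonNeighbors hm hs ht hst hz hzst with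
    ⟨-, rfl⟩ | ⟨rfl, rfl, -⟩ <;>
  rcases eq_mul_or_eq_mul_self_of_mem_commonNeighbors hm hs hu hne.1.symm hz ⟨hzst.1, huz⟩ with
    ⟨-, h⟩ | ⟨rfl, h, -⟩ <;> simp_all

theorem dzMinus_eq_two (hm : ∀ a, m a ≠ 1) {s t z : RAACH H m} (hs : s ∈ Sstar H m)
    (ht : t ∈ Sstar H m) (hst : s ≠ t) (hz : z ≠ 1)
    (hzst : z ∈ (cayRAACH H m).commonNeighbors s t) : dzMinus H m z = 2 := by
  have hnbrs : {y | y ∈ Sstar H m ∧ (cayRAACH H m).Adj y z} = {s, t} := by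
    ext u
    refine ⟨fun ⟨hu, huz⟩ => eq_or_eq_of_adj_of_mem_commonNeighbors hm hs ht hu hst hz hzst huz,
      ?_⟩
    rintro (rfl | rfl)
    exacts [⟨hs, hzst.1⟩, ⟨ht, hzst.2⟩]
  rw [dzMinus, ← Set.ncard_pair hst, ← hnbrs, ← Nat.card_coe_set_eq]
  rfl

theorem mem_sphere2_and_mem_commonNeighbors_iff (hm : ∀ a, m a ≠ 1) {s t z : RAACH H m}
    (hs : s ∈ Sstar H m) (ht : t ∈ Sstar H m) (hst : s ≠ t) :
    z ∈ sphere2 H m ∧ z ∈ (cayRAACH H m).commonNeighbors s t ↔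
      (Commute s t ∧ t ≠ s⁻¹ ∧ z = s * t) ∨ (t = s⁻¹ ∧ orderOf s = 4 ∧ z = s * s) := by
  constructor
  · rintro ⟨hz2, hzst⟩
    obtain ⟨hz1, -⟩ := (mem_sphere2_iff_of_adj hm hs hzst.1).1 hz2
    rcases eq_mul_or_eq_mul_self_of_mem_commonNeighbors hm hs ht hst hz1 hzst with
      ⟨hc, rfl⟩ | ⟨rfl, rfl, hsq⟩
    · exact Or.inl ⟨hc, fun h => hz1 (by rw [h, mul_inv_cancel]), rfl⟩
    · refine Or.inr ⟨rfl, orderOf_eq_prime_pow (p := 2) (n := 1) ?_ ?_, rfl⟩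
      · rwa [pow_one, pow_two]
      · calc s ^ 2 ^ (1 + 1) = s * s * (s * s) := by simp [pow_succ, mul_assoc]
          _ = s * s * (s⁻¹ * s⁻¹) := by rw [← hsq]
          _ = 1 := by group
  · rintro (⟨hc, hinv, rfl⟩ | ⟨rfl, h4, rfl⟩)
    · have hsz : (cayRAACH H m).Adj s (s * t) := (cayRAACH_adj_iff hm).2 (by simpa using ht)
      refine ⟨(mem_sphere2_iff_of_adj hm hs hsz).2 ⟨?_, ?_⟩,
        (SimpleGraph.mem_commonNeighbors _).2 ⟨hsz, ?_⟩⟩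
      · exact fun h => hinv (eq_inv_of_mul_eq_one_right h)
      · exact fun h => hst ((mul_mem_Sstar_iff hm hs ht).1 h).1.symm
      · rw [cayRAACH_adj_iff hm, hc.eq, inv_mul_cancel_left]
        exact hs
    · have hsz : (cayRAACH H m).Adj s (s * s) := (cayRAACH_adj_iff hm).2 (by simpa using hs)
      refine ⟨(mem_sphere2_iff_of_adj hm hs hsz).2 ⟨?_, ?_⟩,
        (SimpleGraph.mem_commonNeighbors _).2 ⟨hsz, ?_⟩⟩
      · rw [← pow_two]
        exact pow_ne_one_of_lt_orderOf two_ne_zero (by rw [h4]; norm_num)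
      · intro h
        have h3 := ((mul_mem_Sstar_iff hm hs hs).1 h).2
        omega
      · have hcube : s * (s * s) = s⁻¹ :=
          eq_inv_of_mul_eq_one_left (by rw [← pow_orderOf_eq_one s, h4]; simp [pow_succ, mul_assoc])
        rw [cayRAACH_adj_iff hm, inv_inv, hcube]
        exact inv_mem_Sstar hs

theorem wS1'_eq (hm : ∀ a, m a ≠ 1) {s t : RAACH H m} (hs : s ∈ Sstar H m)
    (ht : t ∈ Sstar H m) (hst : s ≠ t) :
    wS1' H m s t = if (Commute s t ∧ t ≠ s⁻¹) ∨ (t = s⁻¹ ∧ orderOf s = 4) then 2⁻¹ else 0 := by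
  have key := fun z => mem_sphere2_and_mem_commonNeighbors_iff hm hs ht hst (z := z)
  simp only [SimpleGraph.mem_commonNeighbors] at key
  rw [wS1', if_neg hst]
  split_ifs with hcond
  · obtain ⟨z₀, hz₀⟩ : ∃ z₀, ∀ z, z ∈ sphere2 H m ∧ (cayRAACH H m).Adj s z ∧
        (cayRAACH H m).Adj t z ↔ z = z₀ := by
      rcases hcond with ⟨hc, hinv⟩ | ⟨rfl, h4⟩
      · exact ⟨s * t, fun z => by simp [key, hc, hinv]⟩
      · exact ⟨s * s, fun z => by simp [key, h4]⟩
    obtain ⟨hz₀2, hz₀st⟩ := (hz₀ z₀).2 rfl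
    have hz₀1 := ((mem_sphere2_iff_of_adj hm hs hz₀st.1).1 hz₀2).1
    rw [finsum_mem_ite_eq_of_iff hz₀, dzMinus_eq_two hm hs ht hst hz₀1 hz₀st]
    norm_num
  · refine finsum_mem_eq_zero_of_forall_eq_zero fun z hz => if_neg fun hzst => hcond ?_
    rcases (key z).1 ⟨hz, hzst⟩ with ⟨hc, hinv, -⟩ | ⟨hinv, h4, -⟩
    exacts [Or.inl ⟨hc, hinv⟩, Or.inr ⟨hinv, h4⟩]

theorem apWeight_eq (hm : ∀ a, m a ≠ 1) {s t : RAACH H m} (hs : s ∈ Sstar H m)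
    (ht : t ∈ Sstar H m) (hst : s ≠ t) :
    (apWeight H m s t : ℝ) =
      2 * (if (cayRAACH H m).Adj s t then 1 else 0) + 2 * wS1' H m s t := by
  rw [wS1'_eq hm hs ht hst, apWeight, cayRAACH_adj_iff_of_mem_Sstar hm hs ht]
  by_cases hinv : t = s⁻¹
  · subst hinv
    rcases eq_or_ne (orderOf s) 4 with h4 | h4
    · simp [h4]
    · by_cases h3 : orderOf s = 3 <;> simp [h3, h4]
  · by_cases hc : Commute s t <;> simp [hinv, hst.symm, hc]

end RAACH

/-- **Lemma 4.3:** the identity `Δ_{H*} = 2 Δ_{S₁(e)} + 2 Δ_{S₁'(e)}` between Laplacians on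
`S* = S₁(e)`. -/
theorem lap_associated_pair_identity {S : Type} [Fintype S] (H : SimpleGraph S) (m : S → ℕ∞)
    (hm : ∀ s, m s = 2 ∨ m s = 3 ∨ m s = 4 ∨ m s = (⊤ : ℕ∞)) :
    ∀ (f : RAACH H m → ℝ), ∀ s ∈ Sstar H m,
      lapHstar H m f s = 2 * lapS1 H m f s + 2 * lapS1' H m f s := by
  intro f s hs
  have hm1 : ∀ a, m a ≠ 1 := fun a => by rcases hm a with h | h | h | h <;> simp [h]
  rw [lapHstar, lapS1, lapS1', mul_finsum_mem, mul_finsum_mem,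
    ← finsum_mem_add_distrib RAACH.finite_Sstar]
  refine finsum_mem_congr rfl fun t ht => ?_
  obtain rfl | hst := eq_or_ne s t
  · simp
  · rw [RAACH.apWeight_eq hm1 hs ht hst]
    ring
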